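/- An inverse sequence of groups that is pro-isomorphic to an inverse sequence of finitely generated groups and also pro-isomorphic to an inverse sequence of free groups is pro-isomorphic to an inverse sequence of finitely generated free groups. -/

import Mathlib

open CategoryTheory

universe u

/-- The composition of the bonding maps of an inverse sequence of groups,
`G j ⟶ G i` for `i ≤ j`. -/
def bondComp (G : ℕ → GrpCat.{u}) (f : ∀ i, G (i + 1) ⟶ G i) :
    (i j : ℕ) → i ≤ j → (G j ⟶ G i)
  | i, 0, h => by
      obtain rfl : i = 0 := Nat.le_zero.mp h
      exact 𝟙 (G 0)
  | i, j + 1, h =>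
      if h' : i = j + 1 then by subst h'; exact 𝟙 (G (j + 1))
      else f j ≫ bondComp G f i j (by omega)

/-- A pro-isomorphism (commuting ladder diagram after passing to subsequences)
between two inverse sequences of groups. -/
structure ProIso (G : ℕ → GrpCat.{u}) (f : ∀ i, G (i + 1) ⟶ G i)
    (H : ℕ → GrpCat.{u}) (g : ∀ i, H (i + 1) ⟶ H i) where
  I : ℕ → ℕ
  J : ℕ → ℕ
  strictI : StrictMono I
  strictJ : StrictMono J
  hIJ : ∀ k, I k ≤ J k
  hJI : ∀ k, J k ≤ I (k + 1)
  d : ∀ k, H (J k) ⟶ G (I k)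
  u : ∀ k, G (I (k + 1)) ⟶ H (J k)
  comm₁ : ∀ k, u k ≫ d k =
    bondComp G f (I k) (I (k + 1)) (le_of_lt (strictI (Nat.lt_succ_self k)))
  comm₂ : ∀ k, d (k + 1) ≫ u k =
    bondComp H g (J k) (J (k + 1)) (le_of_lt (strictJ (Nat.lt_succ_self k)))

/-!
Compose the two pro-isomorphisms into a ladder `T` from the finitely generated sequence `A`
to the free sequence `B`, with rungs `T.u n : A (T.I (n + 1)) ⟶ B (T.J n)`. The range of `T.u n`
is finitely generated, as an image of a finitely generated group, and free, as a subgroup of a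
free group (Nielsen–Schreier). Each bonding map `B (T.J (n + 1)) ⟶ B (T.J n)` factors through
`T.u n`, so the ranges form a sequence pro-isomorphic to the subsequence `B ∘ T.J`, hence to `B`
and to `G`.
-/

section BondComp

variable (G : ℕ → GrpCat.{u}) (f : ∀ i, G (i + 1) ⟶ G i)

theorem bondComp_self (i : ℕ) (h : i ≤ i) : bondComp G f i i h = 𝟙 (G i) := by
  cases i with
  | zero => rfl
  | succ n => simp [bondComp]

theorem bondComp_succ (i j : ℕ) (h : i ≤ j) :
    bondComp G f i (j + 1) (h.trans j.le_succ) = f j ≫ bondComp G f i j h := by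
  simp [bondComp, show i ≠ j + 1 by omega]

theorem bondComp_succ_self (i : ℕ) (h : i ≤ i + 1) : bondComp G f i (i + 1) h = f i := by
  rw [bondComp_succ G f i i le_rfl, bondComp_self, Category.comp_id]

theorem bondComp_trans (i j l : ℕ) (hij : i ≤ j) (hjl : j ≤ l) :
    bondComp G f j l hjl ≫ bondComp G f i j hij = bondComp G f i l (hij.trans hjl) := by
  induction l, hjl using Nat.le_induction with
  | base => rw [bondComp_self, Category.id_comp]
  | succ l hjl ih =>
    rw [bondComp_succ G f j l hjl, bondComp_succ G f i l (hij.trans hjl), Category.assoc, ih]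

end BondComp

def jumpSeq (φ : ℕ → ℕ) : ℕ → ℕ
  | 0 => 0
  | k + 1 => φ (jumpSeq φ k) + 1

theorem apply_jumpSeq_le_succ (φ : ℕ → ℕ) (k : ℕ) : φ (jumpSeq φ k) ≤ jumpSeq φ (k + 1) :=
  Nat.le_succ _

theorem jumpSeq_strictMono {φ : ℕ → ℕ} (hφ : ∀ n, n ≤ φ n) : StrictMono (jumpSeq φ) :=
  strictMono_nat_of_lt_succ fun k => Nat.lt_succ_of_le (hφ (jumpSeq φ k))

variable {G : ℕ → GrpCat.{u}} {f : ∀ i, G (i + 1) ⟶ G i}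
  {H : ℕ → GrpCat.{u}} {g : ∀ i, H (i + 1) ⟶ H i}
  {C : ℕ → GrpCat.{u}} {c : ∀ i, C (i + 1) ⟶ C i}

namespace ProIso

def symm (P : ProIso G f H g) : ProIso H g G f where
  I := P.J
  J := fun k => P.I (k + 1)
  strictI := P.strictJ
  strictJ := P.strictI.comp (strictMono_id.add_const 1)
  hIJ := P.hJI
  hJI := fun k => P.hIJ (k + 1)
  d := P.u
  u := fun k => P.d (k + 1)
  comm₁ := P.comm₂
  comm₂ := fun k => P.comm₁ (k + 1)

theorem u_bondComp_d (P : ProIso G f H g) (k l : ℕ) (h : k ≤ l) :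
    P.u l ≫ bondComp H g (P.J k) (P.J l) (P.strictJ.monotone h) ≫ P.d k =
      bondComp G f (P.I k) (P.I (l + 1)) (P.strictI.monotone (h.trans l.le_succ)) := by
  induction l, h using Nat.le_induction with
  | base => rw [bondComp_self, Category.id_comp, P.comm₁]
  | succ l hkl ih =>
    rw [← bondComp_trans H g _ (P.J l) _ (P.strictJ.monotone hkl)
        (P.strictJ.monotone l.le_succ), ← P.comm₂ l, Category.assoc, Category.assoc,
      reassoc_of% P.comm₁ (l + 1), ih, bondComp_trans]

theorem d_bondComp_u (P : ProIso G f H g) (k l : ℕ) (h : k + 1 ≤ l) :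
    P.d l ≫ bondComp G f (P.I (k + 1)) (P.I l) (P.strictI.monotone h) ≫ P.u k =
      bondComp H g (P.J k) (P.J l) (P.strictJ.monotone (k.le_succ.trans h)) := by
  obtain ⟨l, rfl⟩ : ∃ l', l = l' + 1 := ⟨l - 1, by omega⟩
  exact P.symm.u_bondComp_d k l (by omega)

/-- The levels of `G` kept by `P.trans Q`: from level `k`, go up through `P` to `H`, one step
further to a level of `H` seen by `Q`, and back into `G` through `P`. -/
def transIndex (P : ProIso G f H g) (Q : ProIso H g C c) : ℕ → ℕ :=
  jumpSeq fun m => Q.I (P.J m + 1)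

theorem le_I_J_add_one (P : ProIso G f H g) (Q : ProIso H g C c) (m : ℕ) :
    m ≤ Q.I (P.J m + 1) :=
  P.strictJ.le_apply.trans (Nat.le_succ _ |>.trans Q.strictI.le_apply)

theorem transIndex_strictMono (P : ProIso G f H g) (Q : ProIso H g C c) :
    StrictMono (transIndex P Q) :=
  jumpSeq_strictMono (le_I_J_add_one P Q)

theorem transIndex_succ (P : ProIso G f H g) (Q : ProIso H g C c) (n : ℕ) :
    transIndex P Q (n + 1) = Q.I (P.J (transIndex P Q n) + 1) + 1 := rfl

def trans (P : ProIso G f H g) (Q : ProIso H g C c) : ProIso G f C c where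
  I n := P.I (transIndex P Q n)
  J n := Q.J (P.J (transIndex P Q n))
  strictI := P.strictI.comp (transIndex_strictMono P Q)
  strictJ := Q.strictJ.comp (P.strictJ.comp (transIndex_strictMono P Q))
  hIJ _ := (P.hIJ _).trans (Q.strictI.le_apply.trans (Q.hIJ _))
  hJI _ := (Q.hJI _).trans (P.strictJ.le_apply.trans (P.hJI _))
  d n := Q.d (P.J (transIndex P Q n)) ≫
    bondComp H g _ _ Q.strictI.le_apply ≫ P.d (transIndex P Q n)
  u n := P.u (Q.I (P.J (transIndex P Q n) + 1)) ≫
    bondComp H g _ _ P.strictJ.le_apply ≫ Q.u (P.J (transIndex P Q n))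
  comm₁ n := by
    set k := transIndex P Q n
    set l := Q.I (P.J k + 1)
    simp only [Category.assoc, transIndex_succ]
    rw [reassoc_of% Q.comm₁ (P.J k), reassoc_of% bondComp_trans, reassoc_of% bondComp_trans]
    exact P.u_bondComp_d k l (le_I_J_add_one P Q k)
  comm₂ n := by
    set k := transIndex P Q n
    set l := Q.I (P.J k + 1)
    have hkl : P.J k + 1 ≤ P.J (l + 1) := Q.strictI.le_apply.trans P.strictJ.le_apply |>.trans
      (P.strictJ.monotone l.le_succ)
    simp only [Category.assoc, transIndex_succ]
    rw [reassoc_of% P.comm₂ l, reassoc_of% bondComp_trans,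
      reassoc_of% bondComp_trans H g _ (P.J (l + 1)) _ (l.le_succ.trans P.strictJ.le_apply)
        Q.strictI.le_apply]
    exact Q.d_bondComp_u (P.J k) (P.J (l + 1)) hkl

end ProIso

section Subsequence

variable (C c) {φ : ℕ → ℕ} (hφ : StrictMono φ)

def subseqBond (n : ℕ) : C (φ (n + 1)) ⟶ C (φ n) :=
  bondComp C c (φ n) (φ (n + 1)) (hφ.monotone n.le_succ)

theorem bondComp_subseqBond (i j : ℕ) (h : i ≤ j) :
    bondComp (fun n => C (φ n)) (subseqBond C c hφ) i j h =
      bondComp C c (φ i) (φ j) (hφ.monotone h) := by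
  induction j, h using Nat.le_induction with
  | base => rw [bondComp_self, bondComp_self]
  | succ j hij ih => rw [bondComp_succ _ _ i j hij, ih, subseqBond, bondComp_trans]

/-- The ladder runs through the levels `jumpSeq φ k`, so that `φ` of each lies below the next. -/
def ProIso.subseq : ProIso C c (fun n => C (φ n)) (subseqBond C c hφ) where
  I := jumpSeq φ
  J := jumpSeq φ
  strictI := jumpSeq_strictMono fun _ => hφ.le_apply
  strictJ := jumpSeq_strictMono fun _ => hφ.le_apply
  hIJ _ := le_rfl
  hJI k := (jumpSeq_strictMono fun _ => hφ.le_apply).monotone k.le_succ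
  d k := bondComp C c (jumpSeq φ k) (φ (jumpSeq φ k)) hφ.le_apply
  u k := bondComp C c (φ (jumpSeq φ k)) (jumpSeq φ (k + 1)) (apply_jumpSeq_le_succ φ k)
  comm₁ _ := bondComp_trans ..
  comm₂ k := by rw [bondComp_trans, bondComp_subseqBond]

end Subsequence

section Restriction

variable (C c) (K : ∀ n, Subgroup (C n)) (hK : ∀ n x, c n x ∈ K n)

def restrictBond (n : ℕ) : GrpCat.of (K (n + 1)) ⟶ GrpCat.of (K n) :=
  GrpCat.ofHom (((c n).hom.codRestrict (K n) (hK n)).comp (K (n + 1)).subtype)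

def ProIso.restrict :
    ProIso C c (fun n => GrpCat.of (K n)) (restrictBond C c K hK) where
  I k := k
  J k := k
  strictI := strictMono_id
  strictJ := strictMono_id
  hIJ _ := le_rfl
  hJI := Nat.le_succ
  d k := GrpCat.ofHom (K k).subtype
  u k := GrpCat.ofHom ((c k).hom.codRestrict (K k) (hK k))
  comm₁ k := (bondComp_succ_self C c k _).symm
  comm₂ k := by rw [bondComp_succ_self]; rfl

end Restriction

theorem ProIso.subseqBond_mem_range_u (T : ProIso G f H g) (n : ℕ) (x : H (T.J (n + 1))) :
    subseqBond H g T.strictJ n x ∈ (T.u n).hom.range :=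
  ⟨T.d (n + 1) x, by rw [← GrpCat.comp_apply, T.comm₂]; rfl⟩

/-- An inverse sequence of groups that is pro-isomorphic to an inverse sequence of
finitely generated groups and also pro-isomorphic to an inverse sequence of free
groups is pro-isomorphic to an inverse sequence of finitely generated free groups. -/
theorem proIso_fg_free_of_proIso_fg_and_proIso_free
    (G : ℕ → GrpCat.{u}) (f : ∀ i, G (i + 1) ⟶ G i)
    (hfg : ∃ (H : ℕ → GrpCat.{u}) (g : ∀ i, H (i + 1) ⟶ H i),
      (∀ i, Group.FG (H i)) ∧ Nonempty (ProIso G f H g))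
    (hfree : ∃ (H : ℕ → GrpCat.{u}) (g : ∀ i, H (i + 1) ⟶ H i),
      (∀ i, IsFreeGroup (H i)) ∧ Nonempty (ProIso G f H g)) :
    ∃ (H : ℕ → GrpCat.{u}) (g : ∀ i, H (i + 1) ⟶ H i),
      (∀ i, Group.FG (H i) ∧ IsFreeGroup (H i)) ∧ Nonempty (ProIso G f H g) := by
  obtain ⟨A, a, hA, ⟨P⟩⟩ := hfg
  obtain ⟨B, b, hB, ⟨Q⟩⟩ := hfree
  let T : ProIso A a B b := P.symm.trans Q
  let K n := (T.u n).hom.range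
  refine ⟨fun n => GrpCat.of (K n), restrictBond _ _ K T.subseqBond_mem_range_u,
    fun n => ⟨?_, ?_⟩,
    ⟨Q.trans ((ProIso.subseq B b T.strictJ).trans (ProIso.restrict _ _ K _))⟩⟩
  · have := hA (T.I (n + 1))
    exact Group.fg_range (T.u n).hom
  · have := hB (T.J n)
    exact subgroupIsFreeOfIsFree (K n)
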